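/- arXiv:2510.27645 — 3 statements merged into one kernel-verified Lean document; each statement's English description precedes it below -/
import Mathlib

section
/- Let n, m, p, q, r be natural numbers, let A ∈ ℝ^{n×n}, B ∈ ℝ^{n×m}, G ∈ ℝ^{n×q}, C_con ∈ ℝ^{p×n}, D_con ∈ ℝ^{p×m}, H_con ∈ ℝ^{p×q}, C_opt ∈ ℝ^{r×n}, D_opt ∈ ℝ^{r×m}, H_opt ∈ ℝ^{r×q}, let P ∈ ℝ^{n×n} be symmetric positive definite, γ ∈ (0,1], α > 0, S_φ ∈ ℝ^{(r+q)×(r+q)} symmetric, Q ∈ ℝ^{p×p} symmetric, R ∈ ℝ^{m×m} symmetric, S ∈ ℝ^{p×m}, and let φ : ℝ^r → ℝ^q satisfy the incremental sector bound S_φ. Assume the dissipation inequality: for all x ∈ ℝ^n, u ∈ ℝ^m, w ∈ ℝ^q, with x⁺ = A x + B u + G w, y = C_con x + D_con u + H_con w, z = C_opt x + D_opt u + H_opt w, one has x⁺ᵀ P x⁺ − γ xᵀ P x ≤ α (z,w)ᵀ S_φ (z,w) + (y,u)ᵀ [[Q,S],[Sᵀ,R]] (y,u). Then for any two tuples (x^1,u^1,w^1,y^1,z^1)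 and (x^2,u^2,w^2,y^2,z^2) each satisfying the agent equations together with the oracle feedback w^a = φ(z^a) (a = 1,2), the increments Δx = x^1 − x^2, Δx⁺ = x^{1,+} − x^{2,+}, Δy = y^1 − y^2, Δu = u^1 − u^2 satisfy Δx⁺ᵀ P Δx⁺ − γ Δxᵀ P Δx ≤ (Δy, Δu)ᵀ [[Q,S],[Sᵀ,R]] (Δy, Δu). -/
open Matrix

theorem Matrix.mulVec_sub_add_mulVec_sub_add_mulVec_sub {R ι κ₁ κ₂ κ₃ : Type*} [Ring R]
    [Fintype κ₁] [Fintype κ₂] [Fintype κ₃]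
    (A : Matrix ι κ₁ R) (B : Matrix ι κ₂ R) (G : Matrix ι κ₃ R)
    (x₁ x₂ : κ₁ → R) (u₁ u₂ : κ₂ → R) (w₁ w₂ : κ₃ → R) :
    A *ᵥ (x₁ - x₂) + B *ᵥ (u₁ - u₂) + G *ᵥ (w₁ - w₂) =
      (A *ᵥ x₁ + B *ᵥ u₁ + G *ᵥ w₁) - (A *ᵥ x₂ + B *ᵥ u₂ + G *ᵥ w₂) := by
  simp only [mulVec_sub]
  abel

theorem closed_loop_incremental_dissipativity_general
    (n m p q r : ℕ)
    (A : Matrix (Fin n) (Fin n) ℝ) (B : Matrix (Fin n) (Fin m) ℝ)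
    (G : Matrix (Fin n) (Fin q) ℝ)
    (Ccon : Matrix (Fin p) (Fin n) ℝ) (Dcon : Matrix (Fin p) (Fin m) ℝ)
    (Hcon : Matrix (Fin p) (Fin q) ℝ)
    (Copt : Matrix (Fin r) (Fin n) ℝ) (Dopt : Matrix (Fin r) (Fin m) ℝ)
    (Hopt : Matrix (Fin r) (Fin q) ℝ)
    (P : Matrix (Fin n) (Fin n) ℝ)
    (γ : ℝ)
    (α : ℝ) (hα : 0 < α)
    (Sφ : Matrix (Fin r ⊕ Fin q) (Fin r ⊕ Fin q) ℝ)
    (Q : Matrix (Fin p) (Fin p) ℝ)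
    (R : Matrix (Fin m) (Fin m) ℝ)
    (S : Matrix (Fin p) (Fin m) ℝ)
    (φ : (Fin r → ℝ) → (Fin q → ℝ))
    (hsector : ∀ z₁ z₂ : Fin r → ℝ,
      Sum.elim (z₁ - z₂) (φ z₁ - φ z₂) ⬝ᵥ (Sφ *ᵥ Sum.elim (z₁ - z₂) (φ z₁ - φ z₂)) ≤ 0)
    (hdiss : ∀ (x : Fin n → ℝ) (u : Fin m → ℝ) (w : Fin q → ℝ),
      (A *ᵥ x + B *ᵥ u + G *ᵥ w) ⬝ᵥ (P *ᵥ (A *ᵥ x + B *ᵥ u + G *ᵥ w))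
          - γ * (x ⬝ᵥ (P *ᵥ x)) ≤
        α * (Sum.elim (Copt *ᵥ x + Dopt *ᵥ u + Hopt *ᵥ w) w ⬝ᵥ
              (Sφ *ᵥ Sum.elim (Copt *ᵥ x + Dopt *ᵥ u + Hopt *ᵥ w) w)) +
          Sum.elim (Ccon *ᵥ x + Dcon *ᵥ u + Hcon *ᵥ w) u ⬝ᵥ
            (fromBlocks Q S Sᵀ R *ᵥ Sum.elim (Ccon *ᵥ x + Dcon *ᵥ u + Hcon *ᵥ w) u))
    -- two closed-loop tuples
    (x₁ x₂ xp₁ xp₂ : Fin n → ℝ) (u₁ u₂ : Fin m → ℝ) (w₁ w₂ : Fin q → ℝ)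
    (y₁ y₂ : Fin p → ℝ) (z₁ z₂ : Fin r → ℝ)
    (hx₁ : xp₁ = A *ᵥ x₁ + B *ᵥ u₁ + G *ᵥ w₁)
    (hy₁ : y₁ = Ccon *ᵥ x₁ + Dcon *ᵥ u₁ + Hcon *ᵥ w₁)
    (hz₁ : z₁ = Copt *ᵥ x₁ + Dopt *ᵥ u₁ + Hopt *ᵥ w₁)
    (hw₁ : w₁ = φ z₁)
    (hx₂ : xp₂ = A *ᵥ x₂ + B *ᵥ u₂ + G *ᵥ w₂)
    (hy₂ : y₂ = Ccon *ᵥ x₂ + Dcon *ᵥ u₂ + Hcon *ᵥ w₂)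
    (hz₂ : z₂ = Copt *ᵥ x₂ + Dopt *ᵥ u₂ + Hopt *ᵥ w₂)
    (hw₂ : w₂ = φ z₂) :
    (xp₁ - xp₂) ⬝ᵥ (P *ᵥ (xp₁ - xp₂)) - γ * ((x₁ - x₂) ⬝ᵥ (P *ᵥ (x₁ - x₂))) ≤
      Sum.elim (y₁ - y₂) (u₁ - u₂) ⬝ᵥ
        (fromBlocks Q S Sᵀ R *ᵥ Sum.elim (y₁ - y₂) (u₁ - u₂)) := by
  -- By linearity of the agent, the dissipation inequality at the increments
  -- relates the increments of the two closed-loop trajectories.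
  have hdissΔ := hdiss (x₁ - x₂) (u₁ - u₂) (w₁ - w₂)
  rw [mulVec_sub_add_mulVec_sub_add_mulVec_sub A, mulVec_sub_add_mulVec_sub_add_mulVec_sub Ccon,
    mulVec_sub_add_mulVec_sub_add_mulVec_sub Copt, ← hx₁, ← hx₂, ← hy₁, ← hy₂, ← hz₁, ← hz₂]
    at hdissΔ
  have hsectorΔ : Sum.elim (z₁ - z₂) (w₁ - w₂) ⬝ᵥ (Sφ *ᵥ Sum.elim (z₁ - z₂) (w₁ - w₂)) ≤ 0 :=
    hw₁ ▸ hw₂ ▸ hsector z₁ z₂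
  exact hdissΔ.trans (add_le_of_nonpos_left (mul_nonpos_of_nonneg_of_nonpos hα.le hsectorΔ))

/-- if an LTI agent satisfies the dissipation inequality with supply rate
`α (z,w)ᵀ S_φ (z,w) + (y,u)ᵀ [[Q,S],[Sᵀ,R]] (y,u)` and the oracle `φ` satisfies the
incremental sector bound `S_φ`, then increments of closed-loop trajectories satisfy the
dissipation inequality with supply rate `(Δy,Δu)ᵀ [[Q,S],[Sᵀ,R]] (Δy,Δu)`. -/
theorem closed_loop_incremental_dissipativity
    (n m p q r : ℕ)
    (A : Matrix (Fin n) (Fin n) ℝ) (B : Matrix (Fin n) (Fin m) ℝ)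
    (G : Matrix (Fin n) (Fin q) ℝ)
    (Ccon : Matrix (Fin p) (Fin n) ℝ) (Dcon : Matrix (Fin p) (Fin m) ℝ)
    (Hcon : Matrix (Fin p) (Fin q) ℝ)
    (Copt : Matrix (Fin r) (Fin n) ℝ) (Dopt : Matrix (Fin r) (Fin m) ℝ)
    (Hopt : Matrix (Fin r) (Fin q) ℝ)
    (P : Matrix (Fin n) (Fin n) ℝ) (hPsymm : P.IsSymm) (hP : P.PosDef)
    (γ : ℝ) (hγ0 : 0 < γ) (hγ1 : γ ≤ 1)
    (α : ℝ) (hα : 0 < α)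
    (Sφ : Matrix (Fin r ⊕ Fin q) (Fin r ⊕ Fin q) ℝ) (hSφ : Sφ.IsSymm)
    (Q : Matrix (Fin p) (Fin p) ℝ) (hQ : Q.IsSymm)
    (R : Matrix (Fin m) (Fin m) ℝ) (hR : R.IsSymm)
    (S : Matrix (Fin p) (Fin m) ℝ)
    (φ : (Fin r → ℝ) → (Fin q → ℝ))
    (hsector : ∀ z₁ z₂ : Fin r → ℝ,
      Sum.elim (z₁ - z₂) (φ z₁ - φ z₂) ⬝ᵥ (Sφ *ᵥ Sum.elim (z₁ - z₂) (φ z₁ - φ z₂)) ≤ 0)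
    (hdiss : ∀ (x : Fin n → ℝ) (u : Fin m → ℝ) (w : Fin q → ℝ),
      (A *ᵥ x + B *ᵥ u + G *ᵥ w) ⬝ᵥ (P *ᵥ (A *ᵥ x + B *ᵥ u + G *ᵥ w))
          - γ * (x ⬝ᵥ (P *ᵥ x)) ≤
        α * (Sum.elim (Copt *ᵥ x + Dopt *ᵥ u + Hopt *ᵥ w) w ⬝ᵥ
              (Sφ *ᵥ Sum.elim (Copt *ᵥ x + Dopt *ᵥ u + Hopt *ᵥ w) w)) +
          Sum.elim (Ccon *ᵥ x + Dcon *ᵥ u + Hcon *ᵥ w) u ⬝ᵥ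
            (fromBlocks Q S Sᵀ R *ᵥ Sum.elim (Ccon *ᵥ x + Dcon *ᵥ u + Hcon *ᵥ w) u))
    -- two closed-loop tuples
    (x₁ x₂ xp₁ xp₂ : Fin n → ℝ) (u₁ u₂ : Fin m → ℝ) (w₁ w₂ : Fin q → ℝ)
    (y₁ y₂ : Fin p → ℝ) (z₁ z₂ : Fin r → ℝ)
    (hx₁ : xp₁ = A *ᵥ x₁ + B *ᵥ u₁ + G *ᵥ w₁)
    (hy₁ : y₁ = Ccon *ᵥ x₁ + Dcon *ᵥ u₁ + Hcon *ᵥ w₁)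
    (hz₁ : z₁ = Copt *ᵥ x₁ + Dopt *ᵥ u₁ + Hopt *ᵥ w₁)
    (hw₁ : w₁ = φ z₁)
    (hx₂ : xp₂ = A *ᵥ x₂ + B *ᵥ u₂ + G *ᵥ w₂)
    (hy₂ : y₂ = Ccon *ᵥ x₂ + Dcon *ᵥ u₂ + Hcon *ᵥ w₂)
    (hz₂ : z₂ = Copt *ᵥ x₂ + Dopt *ᵥ u₂ + Hopt *ᵥ w₂)
    (hw₂ : w₂ = φ z₂) :
    (xp₁ - xp₂) ⬝ᵥ (P *ᵥ (xp₁ - xp₂)) - γ * ((x₁ - x₂) ⬝ᵥ (P *ᵥ (x₁ - x₂))) ≤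
      Sum.elim (y₁ - y₂) (u₁ - u₂) ⬝ᵥ
        (fromBlocks Q S Sᵀ R *ᵥ Sum.elim (y₁ - y₂) (u₁ - u₂)) :=
  closed_loop_incremental_dissipativity_general n m p q r A B G Ccon Dcon Hcon Copt Dopt Hopt P γ α
    hα Sφ Q R S φ hsector hdiss x₁ x₂ xp₁ xp₂ u₁ u₂ w₁ w₂ y₁ y₂ z₁ z₂ hx₁ hy₁ hz₁ hw₁ hx₂ hy₂ hz₂
    hw₂
end

section
/- Let N ≥ 1 and for each i ∈ {1,…,N} let n_i, m_i, p_i, q_i, r_i be natural numbers, let A_i, B_i, G_i, C_i^con, D_i^con, H_i^con, C_i^opt, D_i^opt, H_i^opt be real matrices of the corresponding sizes, let φ_i : ℝ^{r_i} → ℝ^{q_i} satisfy the incremental sector bound S_{φ_i} for a symmetric matrix S_{φ_i} ∈ ℝ^{(r_i+q_i)×(r_i+q_i)}, let P_i ∈ ℝ^{n_i×n_i} be symmetric positive definite, α_i > 0, Q_i ∈ ℝ^{p_i×p_i} and R_i ∈ ℝ^{m_i×m_i} symmetric, S_i ∈ ℝ^{p_i×m_i}, and let γ ∈ (0,1). Let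 the coupling be given by blocks M_{ij} ∈ ℝ^{m_i×p_j}, with u_i = Σ_{j=1}^N M_{ij} y_j. Assume: (a) for each i and all x_i, u_i, w_i, with x_i⁺, y_i, z_i given by the agent equations, x_i⁺ᵀ P_i x_i⁺ − γ x_iᵀ P_i x_i ≤ α_i (z_i,w_i)ᵀ S_{φ_i} (z_i,w_i) + (y_i,u_i)ᵀ [[Q_i,S_i],[S_iᵀ,R_i]] (y_i,u_i); (b) for all y_1 ∈ ℝ^{p_1}, …, y_N ∈ ℝ^{p_N}, setting u_i = Σ_j M_{ij} y_j, one has Σ_{i=1}^N ( y_iᵀ Q_i y_i + 2 y_iᵀ S_i u_i + u_iᵀ R_i u_i ) ≤ 0. Then for any two trajectories k ↦ (x_i^a(k), u_i^a(k), w_i^a(k), y_i^a(k), z_i^a(k)) (a = 1,2) of the interconnection (i.e., satisfying the agent equations, w_i^a(k) = φ_i(z_i^a(k)), and u_i^a(k) = Σ_j M_{ij} y_j^a(k) for all i and k), the function V(k) = Σ_{i=1}^N (x_i^1(k) − x_i^2(k))ᵀ P_i (x_i^1(k) − x_i^2(k)) satisfies V(k+1) ≤ γ V(k) for all k, and consequently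 V(k) ≤ γ^k V(0). -/
open Matrix


private lemma block_quad {p m : ℕ} (Q : Matrix (Fin p) (Fin p) ℝ)
    (S : Matrix (Fin p) (Fin m) ℝ) (R : Matrix (Fin m) (Fin m) ℝ)
    (a : Fin p → ℝ) (b : Fin m → ℝ) :
    Sum.elim a b ⬝ᵥ (Matrix.fromBlocks Q S Sᵀ R *ᵥ Sum.elim a b)
      = a ⬝ᵥ (Q *ᵥ a) + 2 * (a ⬝ᵥ (S *ᵥ b)) + b ⬝ᵥ (R *ᵥ b) := by
  rw [Matrix.fromBlocks_mulVec, sumElim_dotProduct_sumElim,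
      dotProduct_add, dotProduct_add]
  have h : b ⬝ᵥ (Sᵀ *ᵥ a) = a ⬝ᵥ (S *ᵥ b) := by
    rw [Matrix.mulVec_transpose, dotProduct_comm b, Matrix.dotProduct_mulVec]
  simp only [Sum.elim_comp_inl, Sum.elim_comp_inr]
  rw [h]; ring

/-- contraction of the network interconnection. If each agent is
incrementally dissipative with rate `γ ∈ (0,1)` with respect to the local supply rate
`α_i s_{φ_i} + (y_i,u_i)ᵀ [[Q_i,S_i],[S_iᵀ,R_i]] (y_i,u_i)`, each oracle satisfies its
incremental sector bound, and the network condition holds, then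
`V(k) = Σ_i Δx_i(k)ᵀ P_i Δx_i(k)` satisfies `V(k+1) ≤ γ V(k)` and `V(k) ≤ γ^k V(0)`. -/
theorem interconnection_exponential_contraction
    (N : ℕ) (hN : 1 ≤ N)
    (n m p q r : Fin N → ℕ)
    (A : ∀ i, Matrix (Fin (n i)) (Fin (n i)) ℝ)
    (B : ∀ i, Matrix (Fin (n i)) (Fin (m i)) ℝ)
    (G : ∀ i, Matrix (Fin (n i)) (Fin (q i)) ℝ)
    (Ccon : ∀ i, Matrix (Fin (p i)) (Fin (n i)) ℝ)
    (Dcon : ∀ i, Matrix (Fin (p i)) (Fin (m i)) ℝ)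
    (Hcon : ∀ i, Matrix (Fin (p i)) (Fin (q i)) ℝ)
    (Copt : ∀ i, Matrix (Fin (r i)) (Fin (n i)) ℝ)
    (Dopt : ∀ i, Matrix (Fin (r i)) (Fin (m i)) ℝ)
    (Hopt : ∀ i, Matrix (Fin (r i)) (Fin (q i)) ℝ)
    (φ : ∀ i, (Fin (r i) → ℝ) → (Fin (q i) → ℝ))
    (Sφ : ∀ i, Matrix (Fin (r i) ⊕ Fin (q i)) (Fin (r i) ⊕ Fin (q i)) ℝ)
    (hSφsymm : ∀ i, (Sφ i).IsSymm)
    (hsector : ∀ i (z₁ z₂ : Fin (r i) → ℝ),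
      Sum.elim (z₁ - z₂) (φ i z₁ - φ i z₂) ⬝ᵥ
        (Sφ i *ᵥ Sum.elim (z₁ - z₂) (φ i z₁ - φ i z₂)) ≤ 0)
    (P : ∀ i, Matrix (Fin (n i)) (Fin (n i)) ℝ)
    (hPsymm : ∀ i, (P i).IsSymm) (hP : ∀ i, (P i).PosDef)
    (α : Fin N → ℝ) (hα : ∀ i, 0 < α i)
    (Q : ∀ i, Matrix (Fin (p i)) (Fin (p i)) ℝ) (hQ : ∀ i, (Q i).IsSymm)
    (R : ∀ i, Matrix (Fin (m i)) (Fin (m i)) ℝ) (hR : ∀ i, (R i).IsSymm)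
    (S : ∀ i, Matrix (Fin (p i)) (Fin (m i)) ℝ)
    (γ : ℝ) (hγ0 : 0 < γ) (hγ1 : γ < 1)
    (M : ∀ i j, Matrix (Fin (m i)) (Fin (p j)) ℝ)
    -- (a) local dissipation inequalities
    (hdiss : ∀ i (xi : Fin (n i) → ℝ) (ui : Fin (m i) → ℝ) (wi : Fin (q i) → ℝ),
      (A i *ᵥ xi + B i *ᵥ ui + G i *ᵥ wi) ⬝ᵥ (P i *ᵥ (A i *ᵥ xi + B i *ᵥ ui + G i *ᵥ wi))
          - γ * (xi ⬝ᵥ (P i *ᵥ xi)) ≤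
        α i * (Sum.elim (Copt i *ᵥ xi + Dopt i *ᵥ ui + Hopt i *ᵥ wi) wi ⬝ᵥ
              (Sφ i *ᵥ Sum.elim (Copt i *ᵥ xi + Dopt i *ᵥ ui + Hopt i *ᵥ wi) wi)) +
          Sum.elim (Ccon i *ᵥ xi + Dcon i *ᵥ ui + Hcon i *ᵥ wi) ui ⬝ᵥ
            (fromBlocks (Q i) (S i) (S i)ᵀ (R i) *ᵥ
              Sum.elim (Ccon i *ᵥ xi + Dcon i *ᵥ ui + Hcon i *ᵥ wi) ui))
    -- (b) network condition
    (hnet : ∀ y : (j : Fin N) → Fin (p j) → ℝ,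
      ∑ i, (y i ⬝ᵥ (Q i *ᵥ y i)
            + 2 * (y i ⬝ᵥ (S i *ᵥ ∑ j, M i j *ᵥ y j))
            + (∑ j, M i j *ᵥ y j) ⬝ᵥ (R i *ᵥ ∑ j, M i j *ᵥ y j)) ≤ 0)
    -- two trajectories of the interconnection
    (xa xb : ∀ i, ℕ → Fin (n i) → ℝ)
    (ua ub : ∀ i, ℕ → Fin (m i) → ℝ)
    (wa wb : ∀ i, ℕ → Fin (q i) → ℝ)
    (ya yb : ∀ i, ℕ → Fin (p i) → ℝ)
    (za zb : ∀ i, ℕ → Fin (r i) → ℝ)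
    (htraja : ∀ i k,
      xa i (k+1) = A i *ᵥ xa i k + B i *ᵥ ua i k + G i *ᵥ wa i k ∧
      ya i k = Ccon i *ᵥ xa i k + Dcon i *ᵥ ua i k + Hcon i *ᵥ wa i k ∧
      za i k = Copt i *ᵥ xa i k + Dopt i *ᵥ ua i k + Hopt i *ᵥ wa i k ∧
      wa i k = φ i (za i k) ∧
      ua i k = ∑ j, M i j *ᵥ ya j k)
    (htrajb : ∀ i k,
      xb i (k+1) = A i *ᵥ xb i k + B i *ᵥ ub i k + G i *ᵥ wb i k ∧
      yb i k = Ccon i *ᵥ xb i k + Dcon i *ᵥ ub i k + Hcon i *ᵥ wb i k ∧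
      zb i k = Copt i *ᵥ xb i k + Dopt i *ᵥ ub i k + Hopt i *ᵥ wb i k ∧
      wb i k = φ i (zb i k) ∧
      ub i k = ∑ j, M i j *ᵥ yb j k) :
    (∀ k : ℕ,
      (∑ i, (xa i (k+1) - xb i (k+1)) ⬝ᵥ (P i *ᵥ (xa i (k+1) - xb i (k+1)))) ≤
        γ * ∑ i, (xa i k - xb i k) ⬝ᵥ (P i *ᵥ (xa i k - xb i k))) ∧
    (∀ k : ℕ,
      (∑ i, (xa i k - xb i k) ⬝ᵥ (P i *ᵥ (xa i k - xb i k))) ≤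
        γ ^ k * ∑ i, (xa i 0 - xb i 0) ⬝ᵥ (P i *ᵥ (xa i 0 - xb i 0))) := by
    classical
  have step : ∀ k : ℕ,
      (∑ i, (xa i (k+1) - xb i (k+1)) ⬝ᵥ (P i *ᵥ (xa i (k+1) - xb i (k+1)))) ≤
        γ * ∑ i, (xa i k - xb i k) ⬝ᵥ (P i *ᵥ (xa i k - xb i k)) := by
    intro k
    have key : ∀ i, (xa i (k+1) - xb i (k+1)) ⬝ᵥ (P i *ᵥ (xa i (k+1) - xb i (k+1)))
        - γ * ((xa i k - xb i k) ⬝ᵥ (P i *ᵥ (xa i k - xb i k))) ≤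
        (ya i k - yb i k) ⬝ᵥ (Q i *ᵥ (ya i k - yb i k))
        + 2 * ((ya i k - yb i k) ⬝ᵥ (S i *ᵥ (ua i k - ub i k)))
        + (ua i k - ub i k) ⬝ᵥ (R i *ᵥ (ua i k - ub i k)) := by
      intro i
      obtain ⟨ha1, ha2, ha3, ha4, ha5⟩ := htraja i k
      obtain ⟨hb1, hb2, hb3, hb4, hb5⟩ := htrajb i k
      have hx : xa i (k+1) - xb i (k+1) =
          A i *ᵥ (xa i k - xb i k) + B i *ᵥ (ua i k - ub i k)
            + G i *ᵥ (wa i k - wb i k) := by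
        rw [ha1, hb1]; simp only [Matrix.mulVec_sub]; abel
      have hy : ya i k - yb i k =
          Ccon i *ᵥ (xa i k - xb i k) + Dcon i *ᵥ (ua i k - ub i k)
            + Hcon i *ᵥ (wa i k - wb i k) := by
        rw [ha2, hb2]; simp only [Matrix.mulVec_sub]; abel
      have hz : za i k - zb i k =
          Copt i *ᵥ (xa i k - xb i k) + Dopt i *ᵥ (ua i k - ub i k)
            + Hopt i *ᵥ (wa i k - wb i k) := by
        rw [ha3, hb3]; simp only [Matrix.mulVec_sub]; abel
      have hd := hdiss i (xa i k - xb i k) (ua i k - ub i k) (wa i k - wb i k)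
      rw [← hx, ← hy, ← hz] at hd
      have hsec : Sum.elim (za i k - zb i k) (wa i k - wb i k) ⬝ᵥ
          (Sφ i *ᵥ Sum.elim (za i k - zb i k) (wa i k - wb i k)) ≤ 0 := by
        rw [ha4, hb4]; exact hsector i (za i k) (zb i k)
      have hα' : α i * (Sum.elim (za i k - zb i k) (wa i k - wb i k) ⬝ᵥ
          (Sφ i *ᵥ Sum.elim (za i k - zb i k) (wa i k - wb i k))) ≤ 0 :=
        mul_nonpos_of_nonneg_of_nonpos (hα i).le hsec
      calc (xa i (k+1) - xb i (k+1)) ⬝ᵥ (P i *ᵥ (xa i (k+1) - xb i (k+1)))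
          - γ * ((xa i k - xb i k) ⬝ᵥ (P i *ᵥ (xa i k - xb i k))) ≤ _ := hd
        _ ≤ 0 + Sum.elim (ya i k - yb i k) (ua i k - ub i k) ⬝ᵥ
              (Matrix.fromBlocks (Q i) (S i) (S i)ᵀ (R i) *ᵥ
                Sum.elim (ya i k - yb i k) (ua i k - ub i k)) :=
            add_le_add_left hα' _
        _ = _ := by rw [zero_add, block_quad]
    have hu : ∀ i, ua i k - ub i k = ∑ j, M i j *ᵥ (ya j k - yb j k) := by
      intro i
      rw [(htraja i k).2.2.2.2, (htrajb i k).2.2.2.2, ← Finset.sum_sub_distrib]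
      simp [Matrix.mulVec_sub]
    have hnet' := hnet (fun j => ya j k - yb j k)
    simp only [← hu] at hnet'
    have hsum := Finset.sum_le_sum (fun i (_ : i ∈ Finset.univ) => key i)
    rw [Finset.sum_sub_distrib, ← Finset.mul_sum] at hsum
    linarith
  refine ⟨step, ?_⟩
  intro k
  induction k with
  | zero => simp
  | succ k ih =>
    calc (∑ i, (xa i (k+1) - xb i (k+1)) ⬝ᵥ (P i *ᵥ (xa i (k+1) - xb i (k+1))))
        ≤ γ * ∑ i, (xa i k - xb i k) ⬝ᵥ (P i *ᵥ (xa i k - xb i k)) := step k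
      _ ≤ γ * (γ ^ k * ∑ i, (xa i 0 - xb i 0) ⬝ᵥ (P i *ᵥ (xa i 0 - xb i 0))) :=
          mul_le_mul_of_nonneg_left ih hγ0.le
      _ = γ ^ (k+1) * ∑ i, (xa i 0 - xb i 0) ⬝ᵥ (P i *ᵥ (xa i 0 - xb i 0)) := by ring
end

section
/- Let N ≥ 2, let L ∈ ℝ^{N×N} be a symmetric matrix (the Laplacian of an undirected communication graph), let ρ, η > 0, and let constants 0 < μ̄ < μ ≤ K < K̄ be given. For each i ∈ {1,…,N} let f_i : ℝ → ℝ be differentiable with derivative f_i' that is μ-strongly monotone ((f_i'(a) − f_i'(b))(a − b) ≥ μ(a−b)² for all a,b) and K-Lipschitz (|f_i'(a) − f_i'(b)| ≤ K|a−b| for all a,b). Suppose there exist scalars P_i > 0, α_i > 0, Q_i, S_i, R_i ∈ ℝ for i = 1,…,N such that: (1) for each i, the matrix [[2α_i K̄ μ̄ + Q_i, ρP_i + S_i, ηP_i − α_i(K̄+μ̄)], [ρP_i + S_i, −ρ²P_i + R_i, −ρηP_i], [ηP_i − α_i(K̄+μ̄), −ρηP_i, −η²P_i + 2α_i]] is positive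 semidefinite; and (2) with Q = diag(Q_1,…,Q_N), S = diag(S_1,…,S_N), R = diag(R_1,…,R_N), the matrix Q + L Sᵀ + S L + L R L is negative definite. Then distributed gradient descent x_i⁺ = x_i − η f_i'(x_i) − ρ (L x)_i is nonexpansive and globally asymptotically contractive: for any two trajectories x^1(k), x^2(k) ∈ ℝ^N of the iteration, Σ_i P_i (x_i^1(k) − x_i^2(k))² is nonincreasing in k and x^1(k) − x^2(k) → 0 as k → ∞. -/
open Matrix

private lemma net_quad {N : ℕ} (L : Matrix (Fin N) (Fin N) ℝ) (hL : Lᵀ = L)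
    (Q S R d : Fin N → ℝ) :
    d ⬝ᵥ ((Matrix.diagonal Q + L * (Matrix.diagonal S)ᵀ + Matrix.diagonal S * L
               + L * Matrix.diagonal R * L) *ᵥ d)
    = ∑ i, (Q i * d i ^ 2 + 2 * S i * d i * (L *ᵥ d) i + R i * (L *ᵥ d) i ^ 2) := by
  have hsw : ∀ v : Fin N → ℝ, d ⬝ᵥ (L *ᵥ v) = (L *ᵥ d) ⬝ᵥ v := by
    intro v
    rw [Matrix.dotProduct_mulVec, ← Matrix.mulVec_transpose, hL]
  rw [Matrix.add_mulVec, Matrix.add_mulVec, Matrix.add_mulVec,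
    dotProduct_add, dotProduct_add, dotProduct_add,
    Matrix.diagonal_transpose, ← Matrix.mulVec_mulVec, ← Matrix.mulVec_mulVec,
    ← Matrix.mulVec_mulVec, ← Matrix.mulVec_mulVec, hsw, hsw]
  simp only [dotProduct, Matrix.mulVec_diagonal, ← Finset.sum_add_distrib]
  exact Finset.sum_congr rfl fun i _ => by ring

private lemma agent_quad (ρ η Kbar μbar Pv αi Qi Si Ri a u w : ℝ)
    (h : (!![2 * αi * Kbar * μbar + Qi,   ρ * Pv + Si,       η * Pv - αi * (Kbar + μbar);
          ρ * Pv + Si,                 -ρ ^ 2 * Pv + Ri,  -ρ * η * Pv;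
          η * Pv - αi * (Kbar + μbar), -ρ * η * Pv,        -η ^ 2 * Pv + 2 * αi]).PosSemidef) :
    Pv * (a - η * w - ρ * u) ^ 2 ≤ Pv * a ^ 2 + Qi * a ^ 2 + 2 * Si * a * u + Ri * u ^ 2
      + 2 * αi * ((w - Kbar * a) * (w - μbar * a)) := by
  have h0 := h.dotProduct_mulVec_nonneg ![a, u, w]
  simp only [dotProduct, Matrix.mulVec, Fin.sum_univ_three, Matrix.cons_val_zero,
    Matrix.cons_val_one, Matrix.head_cons, Matrix.cons_val_two, Matrix.tail_cons,
    Matrix.of_apply, Matrix.cons_val', Matrix.head_fin_const, Matrix.empty_val',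
    Matrix.cons_val_fin_one, Pi.star_apply, star_trivial] at h0
  nlinarith [h0]

private lemma sector_bound (μbar μ K Kbar a w : ℝ)
    (hμbar : 0 < μbar) (hμ : μbar < μ) (hμK : μ ≤ K) (hKbar : K < Kbar)
    (h1 : w * a ≥ μ * a ^ 2) (h2 : |w| ≤ K * |a|) :
    (w - Kbar * a) * (w - μbar * a) ≤ -((Kbar - K) * (μ - μbar)) * a ^ 2 := by
  rcases eq_or_ne a 0 with rfl | ha
  · have : w = 0 := by
      have := h2; simp at this; linarith [abs_nonneg w, this]
    simp [this]
  · have ha2 : 0 < a ^ 2 := by positivity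
    have hwa : w * a ≤ K * a ^ 2 := by
      have : w * a ≤ |w * a| := le_abs_self _
      rw [abs_mul] at this
      nlinarith [abs_nonneg a, sq_abs a, this, mul_le_mul_of_nonneg_right h2 (abs_nonneg a)]
    have hub : (Kbar * a ^ 2 - w * a) ≥ (Kbar - K) * a ^ 2 := by nlinarith
    have hlb : (w * a - μbar * a ^ 2) ≥ (μ - μbar) * a ^ 2 := by nlinarith
    have hprod : (Kbar * a ^ 2 - w * a) * (w * a - μbar * a ^ 2)
        ≥ ((Kbar - K) * (μ - μbar)) * a ^ 2 * a ^ 2 := by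
      have h4 : (0:ℝ) ≤ (μ - μbar) * a ^ 2 := by nlinarith
      nlinarith [mul_le_mul hub hlb h4 (by nlinarith : (0:ℝ) ≤ Kbar * a^2 - w*a)]
    nlinarith [sq_nonneg (w*a), sq_nonneg a, ha2, hprod]

/-- if the local dissipation LMIs (with sector constants `K̄ > K`,
`μ̄ < μ`) and the strict network LMI `Q + LSᵀ + SL + LRL ≺ 0` are feasible, then
distributed gradient descent `x_i⁺ = x_i − η f_i'(x_i) − ρ(Lx)_i` is nonexpansive in
the metric `Σ_i P_i (Δx_i)²` and all incremental trajectories converge to zero. -/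
theorem dgd_network_contraction
    (N : ℕ) (hN : 2 ≤ N)
    (L : Matrix (Fin N) (Fin N) ℝ) (hL : L.IsSymm)
    (ρ η : ℝ) (hρ : 0 < ρ) (hη : 0 < η)
    (μbar μ K Kbar : ℝ)
    (hμbar : 0 < μbar) (hμ : μbar < μ) (hμK : μ ≤ K) (hKbar : K < Kbar)
    (f : Fin N → ℝ → ℝ) (f' : Fin N → ℝ → ℝ)
    (hderiv : ∀ (i : Fin N) (x : ℝ), HasDerivAt (f i) (f' i x) x)
    (hmono : ∀ (i : Fin N) (a b : ℝ), (f' i a - f' i b) * (a - b) ≥ μ * (a - b) ^ 2)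
    (hlip : ∀ (i : Fin N) (a b : ℝ), |f' i a - f' i b| ≤ K * |a - b|)
    (P α Q S R : Fin N → ℝ)
    (hP : ∀ i, 0 < P i) (hα : ∀ i, 0 < α i)
    -- (1) local dissipation LMIs
    (hLMI : ∀ i,
      (!![2 * α i * Kbar * μbar + Q i,   ρ * P i + S i,       η * P i - α i * (Kbar + μbar);
          ρ * P i + S i,                 -ρ ^ 2 * P i + R i,  -ρ * η * P i;
          η * P i - α i * (Kbar + μbar), -ρ * η * P i,        -η ^ 2 * P i + 2 * α i]).PosSemidef)
    -- (2) strict network LMI: Q + LSᵀ + SL + LRL ≺ 0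
    (hnet : (-(Matrix.diagonal Q + L * (Matrix.diagonal S)ᵀ + Matrix.diagonal S * L
               + L * Matrix.diagonal R * L)).PosDef)
    -- two trajectories of distributed gradient descent
    (x₁ x₂ : ℕ → Fin N → ℝ)
    (hx₁ : ∀ (k : ℕ) (i : Fin N),
      x₁ (k+1) i = x₁ k i - η * f' i (x₁ k i) - ρ * (L *ᵥ x₁ k) i)
    (hx₂ : ∀ (k : ℕ) (i : Fin N),
      x₂ (k+1) i = x₂ k i - η * f' i (x₂ k i) - ρ * (L *ᵥ x₂ k) i) :
    Antitone (fun k : ℕ => ∑ i, P i * (x₁ k i - x₂ k i) ^ 2) ∧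
    (∀ i, Filter.Tendsto (fun k : ℕ => x₁ k i - x₂ k i) Filter.atTop (nhds 0)) := by
  set ε : ℝ := (Kbar - K) * (μ - μbar) with hε
  have hεpos : 0 < ε := by
    apply mul_pos <;> linarith
  set Δ : ℕ → Fin N → ℝ := fun k i => x₁ k i - x₂ k i with hΔ
  set W : ℕ → Fin N → ℝ := fun k i => f' i (x₁ k i) - f' i (x₂ k i) with hW
  set V : ℕ → ℝ := fun k => ∑ i, P i * (Δ k i) ^ 2 with hV
  -- increment dynamics
  have hLdiff : ∀ k i, (L *ᵥ x₁ k) i - (L *ᵥ x₂ k) i = (L *ᵥ Δ k) i := by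
    intro k i
    simp only [Matrix.mulVec, dotProduct, hΔ, ← Finset.sum_sub_distrib]
    exact Finset.sum_congr rfl fun j _ => by ring
  have hstep : ∀ k i, Δ (k+1) i = Δ k i - η * W k i - ρ * (L *ᵥ Δ k) i := by
    intro k i
    show x₁ (k+1) i - x₂ (k+1) i = _
    rw [hx₁ k i, hx₂ k i, ← hLdiff k i]
    show _ = (x₁ k i - x₂ k i) - η * (f' i (x₁ k i) - f' i (x₂ k i))
      - ρ * ((L *ᵥ x₁ k) i - (L *ᵥ x₂ k) i)
    ring
  -- key dissipation inequality
  have hkey : ∀ k, V (k+1) + ∑ i, 2 * α i * ε * (Δ k i) ^ 2 ≤ V k := by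
    intro k
    have hper : ∀ i, P i * (Δ (k+1) i) ^ 2 + 2 * α i * ε * (Δ k i) ^ 2
        ≤ P i * (Δ k i) ^ 2
          + (Q i * (Δ k i) ^ 2 + 2 * S i * (Δ k i) * (L *ᵥ Δ k) i + R i * ((L *ᵥ Δ k) i) ^ 2) := by
      intro i
      have h1 := agent_quad ρ η Kbar μbar (P i) (α i) (Q i) (S i) (R i)
        (Δ k i) ((L *ᵥ Δ k) i) (W k i) (hLMI i)
      have hsec := sector_bound μbar μ K Kbar (Δ k i) (W k i) hμbar hμ hμK hKbar
        (hmono i (x₁ k i) (x₂ k i)) (hlip i (x₁ k i) (x₂ k i))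
      rw [← hstep k i] at h1
      rw [← hε] at hsec
      nlinarith [mul_le_mul_of_nonneg_left hsec (le_of_lt (hα i)), h1]
    have hnetle : ∑ i, (Q i * (Δ k i) ^ 2 + 2 * S i * (Δ k i) * (L *ᵥ Δ k) i
        + R i * ((L *ᵥ Δ k) i) ^ 2) ≤ 0 := by
      have := hnet.posSemidef.dotProduct_mulVec_nonneg (Δ k)
      simp only [star_trivial] at this
      rw [Matrix.neg_mulVec, dotProduct_neg, net_quad L hL (Q) (S) (R) (Δ k)] at this
      linarith
    calc V (k+1) + ∑ i, 2 * α i * ε * (Δ k i) ^ 2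
        = ∑ i, (P i * (Δ (k+1) i) ^ 2 + 2 * α i * ε * (Δ k i) ^ 2) := by
          rw [Finset.sum_add_distrib]
      _ ≤ ∑ i, (P i * (Δ k i) ^ 2
          + (Q i * (Δ k i) ^ 2 + 2 * S i * (Δ k i) * (L *ᵥ Δ k) i
            + R i * ((L *ᵥ Δ k) i) ^ 2)) :=
          Finset.sum_le_sum fun i _ => hper i
      _ = V k + ∑ i, (Q i * (Δ k i) ^ 2 + 2 * S i * (Δ k i) * (L *ᵥ Δ k) i
            + R i * ((L *ᵥ Δ k) i) ^ 2) := by rw [Finset.sum_add_distrib]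
      _ ≤ V k := by linarith
  have hsumnonneg : ∀ k, 0 ≤ ∑ i, 2 * α i * ε * (Δ k i) ^ 2 := by
    intro k
    apply Finset.sum_nonneg
    intro i _
    have := hα i
    positivity
  have hanti : Antitone V := by
    apply antitone_nat_of_succ_le
    intro k
    linarith [hkey k, hsumnonneg k]
  refine ⟨hanti, ?_⟩
  -- convergence
  have hVnonneg : ∀ k, 0 ≤ V k := by
    intro k
    apply Finset.sum_nonneg
    intro i _
    have := hP i
    positivity
  have hbdd : BddBelow (Set.range V) := ⟨0, by rintro _ ⟨k, rfl⟩; exact hVnonneg k⟩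
  have hVconv : Filter.Tendsto V Filter.atTop (nhds (⨅ k, V k)) :=
    tendsto_atTop_ciInf hanti hbdd
  have hdiff : Filter.Tendsto (fun k => V k - V (k+1)) Filter.atTop (nhds 0) := by
    have h2 : Filter.Tendsto (fun k => V (k+1)) Filter.atTop (nhds (⨅ k, V k)) :=
      hVconv.comp (Filter.tendsto_add_atTop_nat 1)
    have := hVconv.sub h2
    simpa using this
  intro i
  have hci : 0 < 2 * α i * ε := by have := hα i; positivity
  have hsq : Filter.Tendsto (fun k => (Δ k i) ^ 2) Filter.atTop (nhds 0) := by
    apply squeeze_zero (fun k => sq_nonneg _)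
      (g := fun k => (V k - V (k+1)) / (2 * α i * ε))
    · intro k
      rw [le_div_iff₀ hci]
      have hterm : 2 * α i * ε * (Δ k i) ^ 2 ≤ ∑ j, 2 * α j * ε * (Δ k j) ^ 2 :=
        Finset.single_le_sum (f := fun j => 2 * α j * ε * (Δ k j) ^ 2)
          (fun j _ => by have := hα j; positivity) (Finset.mem_univ i)
      calc (Δ k i) ^ 2 * (2 * α i * ε) = 2 * α i * ε * (Δ k i) ^ 2 := by ring
        _ ≤ ∑ j, 2 * α j * ε * (Δ k j) ^ 2 := hterm
        _ ≤ V k - V (k+1) := by linarith [hkey k]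
    · simpa using hdiff.div_const (2 * α i * ε)
  have habs : Filter.Tendsto (fun k => |Δ k i|) Filter.atTop (nhds 0) := by
    have h := (Real.continuous_sqrt.tendsto 0).comp hsq
    rw [Real.sqrt_zero] at h
    have heq : (fun k => |Δ k i|) = (fun x => Real.sqrt x) ∘ (fun k => Δ k i ^ 2) := by
      funext k; simp [Real.sqrt_sq_eq_abs]
    rw [heq]; exact h
  have hneg : Filter.Tendsto (fun k => -|Δ k i|) Filter.atTop (nhds 0) := by
    simpa using habs.neg
  exact tendsto_of_tendsto_of_tendsto_of_le_of_le hneg habs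
    (fun k => neg_abs_le _) (fun k => le_abs_self _)
end
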